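/- arXiv:1601.05690 — 3 statements merged into one kernel-verified Lean document; each statement's English description precedes it below -/
import Mathlib

section
/- The function φ(z) = e^z (1 + z/(e^z - 1))^2, extended by φ(0) = 4, is monotonically increasing on [0, ∞). -/
/-! With `u = exp z` and `q = 1 + z / (u - 1)`, the derivative of `u * q ^ 2` factors as
`u * q * (u + 1) * (u - 1 - z) / (u - 1) ^ 2`, which is nonnegative because `q > 0` and
`1 + z ≤ exp z`; so the formula is increasing on `(0, ∞)`. At the left endpoint, the bound
`1 - y ≤ exp (-y)` gives `q ≥ 1 + exp (-y)`, hence `u * q ^ 2 ≥ (u + 1) ^ 2 / u ≥ 4`. -/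

open Real Set

lemma div_exp_sub_one_nonneg (z : ℝ) : 0 ≤ z / (exp z - 1) := by
  rcases le_total 0 z with hz | hz
  · exact div_nonneg hz (sub_nonneg.2 (one_le_exp hz))
  · exact div_nonneg_of_nonpos hz (sub_nonpos.2 (exp_le_one_iff.2 hz))

lemma hasDerivAt_exp_mul_one_add_div_exp_sub_one_sq {z : ℝ} (hz : z ≠ 0) :
    HasDerivAt (fun z => exp z * (1 + z / (exp z - 1)) ^ 2)
      (exp z * (1 + z / (exp z - 1)) * ((exp z + 1) * (exp z - 1 - z) / (exp z - 1) ^ 2)) z := by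
  have hden : exp z - 1 ≠ 0 := sub_ne_zero.2 ((exp_eq_one_iff z).not.2 hz)
  have hq : HasDerivAt (fun z => 1 + z / (exp z - 1))
      ((1 * (exp z - 1) - z * exp z) / (exp z - 1) ^ 2) z :=
    ((hasDerivAt_id z).div ((hasDerivAt_exp z).sub_const 1) hden).const_add 1
  refine ((hasDerivAt_exp z).mul (hq.fun_pow 2)).congr_deriv ?_
  push_cast
  field_simp
  ring

lemma monotoneOn_exp_mul_one_add_div_exp_sub_one_sq :
    MonotoneOn (fun z => exp z * (1 + z / (exp z - 1)) ^ 2) (Ioi 0) := by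
  have hderiv : ∀ z ∈ Ioi (0 : ℝ), HasDerivAt (fun z => exp z * (1 + z / (exp z - 1)) ^ 2)
      (exp z * (1 + z / (exp z - 1)) * ((exp z + 1) * (exp z - 1 - z) / (exp z - 1) ^ 2)) z :=
    fun z hz => hasDerivAt_exp_mul_one_add_div_exp_sub_one_sq (ne_of_gt hz)
  refine monotoneOn_of_hasDerivWithinAt_nonneg (convex_Ioi 0)
    (fun z hz => (hderiv z hz).continuousAt.continuousWithinAt)
    (fun z hz => (hderiv z (interior_subset hz)).hasDerivWithinAt) fun z _ => ?_
  have hq : 0 ≤ 1 + z / (exp z - 1) := by linarith [div_exp_sub_one_nonneg z]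
  have hgap : 0 ≤ exp z - 1 - z := by linarith [add_one_le_exp z]
  positivity

lemma exp_neg_le_div_exp_sub_one {y : ℝ} (hy : 0 < y) : exp (-y) ≤ y / (exp y - 1) := by
  have hden : 0 < exp y - 1 := sub_pos.2 (one_lt_exp_iff.2 hy)
  rw [le_div_iff₀ hden, mul_sub, ← exp_add, neg_add_cancel, exp_zero, mul_one]
  linarith [add_one_le_exp (-y)]

lemma four_le_exp_mul_one_add_div_exp_sub_one_sq {y : ℝ} (hy : 0 < y) :
    4 ≤ exp y * (1 + y / (exp y - 1)) ^ 2 := by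
  calc (4 : ℝ) ≤ exp y * (1 + exp (-y)) ^ 2 := by
        rw [exp_neg]
        field_simp
        nlinarith [sq_nonneg (exp y - 1)]
    _ ≤ exp y * (1 + y / (exp y - 1)) ^ 2 := by
        gcongr
        exact exp_neg_le_div_exp_sub_one hy

theorem phi_monotoneOn :
    MonotoneOn (fun z : ℝ =>
      if z = 0 then 4 else Real.exp z * (1 + z / (Real.exp z - 1)) ^ 2)
      (Set.Ici 0) := by
  intro x (hx : 0 ≤ x) y (hy : 0 ≤ y) hxy
  rcases hx.eq_or_lt with rfl | hx
  · rcases hy.eq_or_lt with rfl | hy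
    · rfl
    · simpa [hy.ne'] using four_le_exp_mul_one_add_div_exp_sub_one_sq hy
  · have hy : 0 < y := hx.trans_le hxy
    simpa [hx.ne', hy.ne'] using monotoneOn_exp_mul_one_add_div_exp_sub_one_sq hx hy hxy
end

section
/- Let N ≥ 2 and 1 ≤ k ≤ N/4 be integers, and let ω_k = N(1-1/N)^k / (N + (k+1-N)(1-1/N)^k). Then ((N - ω_k)/ω_k) / ((1-(1-1/N)^k)(N - k·ω_k)) ≤ (1/(1-1/N)^k) · (1 + (k/N)(1-1/N)^k / (1-(1-1/N)^k))^2. -/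
/-! Write `ω = N r / D` with `D = N + (k + 1 - N) r = N (1 - r) + (k + 1) r`. Then `(N - ω) / ω = (D - r) / r`
and `N - k ω = N (D - k r) / D`, so the left side is `(1 / r) · (D - r) / (N (1 - r)) · D / (D - k r)`, while the
right side is `(1 / r) · ((D - r) / (N (1 - r))) ^ 2`. The claim reduces to `D / (D - k r) ≤ (D - r) / (D - (k + 1) r)`,
whose cross-multiplied form has slack exactly `k r ^ 2`. -/

section GapRatio

variable {n k r D : ℝ}

lemma div_sub_mul_le_sub_div_sub_add_one_mul (hx : 0 < D - (k + 1) * r) (hr : 0 ≤ r)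
    (hk : 0 ≤ k) : D / (D - k * r) ≤ (D - r) / (D - (k + 1) * r) := by
  rw [div_le_div_iff₀ (by linarith) hx]
  nlinarith [mul_nonneg hk (sq_nonneg r)]

lemma sub_mul_div_div_mul_div (hn : n ≠ 0) (hD : D ≠ 0) :
    (n - n * r / D) / (n * r / D) = (D - r) / r := by
  rw [sub_div' hD, div_div_div_cancel_right₀ hD, ← mul_sub, mul_div_mul_left _ _ hn]

lemma sub_mul_mul_div (hD : D ≠ 0) : n - k * (n * r / D) = n * (D - k * r) / D := by
  rw [mul_div_assoc', sub_div' hD]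
  ring

lemma gap_ratio_eq (hn : n ≠ 0) (hr : r ≠ 0) (hD : D ≠ 0) :
    (n - n * r / D) / (n * r / D) / ((1 - r) * (n - k * (n * r / D))) =
      1 / r * ((D - r) / (n * (1 - r))) * (D / (D - k * r)) := by
  rw [sub_mul_div_div_mul_div hn hD, sub_mul_mul_div hD]
  field_simp

lemma one_add_div_mul_div_one_sub (hn : n ≠ 0) (hr : r ≠ 1) :
    1 + k / n * r / (1 - r) = (n * (1 - r) + k * r) / (n * (1 - r)) := by
  have : 1 - r ≠ 0 := sub_ne_zero.2 hr.symm
  field_simp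

end GapRatio

lemma one_sub_inv_pow_mem_Ioo {n : ℝ} (hn : 1 < n) {k : ℕ} (hk : k ≠ 0) :
    (1 - 1 / n) ^ k ∈ Set.Ioo 0 1 := by
  have hinv : 0 < 1 / n ∧ 1 / n < 1 := ⟨by positivity, (div_lt_one (by linarith)).2 hn⟩
  exact ⟨pow_pos (by linarith) k, pow_lt_one₀ (by linarith) (by linarith) hk⟩

theorem gap_ratio_bound_general (N k : ℕ) (hN : 2 ≤ N) (hk1 : 1 ≤ k) :
    let r : ℝ := (1 - 1/(N:ℝ)) ^ k
    let ω : ℝ := (N:ℝ) * r / ((N:ℝ) + ((k:ℝ) + 1 - N) * r)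
    (((N:ℝ) - ω) / ω) / ((1 - r) * ((N:ℝ) - k * ω)) ≤
      (1 / r) * (1 + ((k:ℝ)/(N:ℝ)) * r / (1 - r)) ^ 2 := by
  intro r ω
  obtain ⟨hr0, hr1⟩ := one_sub_inv_pow_mem_Ioo (n := N) (by exact_mod_cast hN) (k := k) (by omega)
  have hn : (0 : ℝ) < N := Nat.cast_pos.2 (by omega)
  set D : ℝ := N + (k + 1 - N) * r
  have hDx : D - (k + 1) * r = N * (1 - r) := by ring
  have hDr : N * (1 - r) + k * r = D - r := by ring
  have hNr : 0 < N * (1 - r) := mul_pos hn (by linarith)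
  have hx : 0 < D - (k + 1) * r := hDx ▸ hNr
  rw [gap_ratio_eq hn.ne' hr0.ne' (by nlinarith : 0 < D).ne',
    one_add_div_mul_div_one_sub hn.ne' hr1.ne, hDr, sq, ← mul_assoc]
  refine mul_le_mul_of_nonneg_left ?_ (by rw [← hDr]; positivity)
  simpa only [hDx] using div_sub_mul_le_sub_div_sub_add_one_mul hx hr0.le k.cast_nonneg

theorem gap_ratio_bound (N k : ℕ) (hN : 2 ≤ N) (hk1 : 1 ≤ k) (hkN : (k:ℝ) ≤ (N:ℝ)/4) :
    let r : ℝ := (1 - 1/(N:ℝ)) ^ k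
    let ω : ℝ := (N:ℝ) * r / ((N:ℝ) + ((k:ℝ) + 1 - N) * r)
    (((N:ℝ) - ω) / ω) / ((1 - r) * ((N:ℝ) - k * ω)) ≤
      (1 / r) * (1 + ((k:ℝ)/(N:ℝ)) * r / (1 - r)) ^ 2 :=
  gap_ratio_bound_general N k hN hk1
end

section
/- For all integers N ≥ 5 and k with 1 ≤ k ≤ N/4, e^z (1 + z/(e^z-1))^2 evaluated at z = -k·ln(1-1/N) is at most its value at z = -(N/4)·ln(1-1/N), which is at most its value at z = -(5/4)·ln(4/5), and the latter is < 4.7. -/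
/-!
Writing `φ'` in the factored form `eᶻ (1 + z/(eᶻ-1)) (eᶻ+1)(eᶻ-1-z)/(eᶻ-1)²` shows that `φ` is
monotone on `(0, ∞)`, so the first two inequalities reduce to `z₁ ≤ z₂ ≤ z₃`. The first is
`k ≤ N/4`; the second is the monotonicity of `-log(1-x)/x = ∑ xⁿ/(n+1)` evaluated at
`1/N ≤ 1/5`. For the numerical bound, `exp z₃ = (5/4)^(5/4)` is located through its fourth power
and `z₃` is bounded above by the partial sums of the logarithm series.
-/

open Real Set

noncomputable def phi (z : ℝ) : ℝ := exp z * (1 + z / (exp z - 1)) ^ 2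

lemma hasDerivAt_phi {z : ℝ} (hz : z ≠ 0) :
    HasDerivAt phi
      (exp z * (1 + z / (exp z - 1)) * ((exp z + 1) * (exp z - 1 - z)) / (exp z - 1) ^ 2) z := by
  have hE : exp z - 1 ≠ 0 := sub_ne_zero.2 (by simpa using hz)
  have hu : HasDerivAt (fun z => z / (exp z - 1))
      ((1 * (exp z - 1) - z * exp z) / (exp z - 1) ^ 2) z :=
    (hasDerivAt_id z).div ((hasDerivAt_exp z).sub_const 1) hE
  refine ((hasDerivAt_exp z).mul ((hu.const_add 1).fun_pow 2)).congr_deriv ?_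
  simp only [Nat.cast_ofNat, Nat.add_one_sub_one, pow_one, one_mul]
  field_simp
  ring

lemma monotoneOn_phi : MonotoneOn phi (Ioi 0) := by
  refine monotoneOn_of_hasDerivWithinAt_nonneg (convex_Ioi 0)
    (fun z hz => (hasDerivAt_phi (ne_of_gt hz)).continuousAt.continuousWithinAt)
    (fun z hz => (hasDerivAt_phi (ne_of_gt (interior_subset hz))).hasDerivWithinAt) ?_
  rw [interior_Ioi]
  intro z (hz : 0 < z)
  have hz' : z + 1 ≤ exp z := add_one_le_exp z
  have hE : 0 < exp z - 1 := by linarith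
  have : 0 ≤ exp z - 1 - z := by linarith
  positivity

lemma monotoneOn_neg_log_one_sub_div : MonotoneOn (fun x => -log (1 - x) / x) (Ioo 0 1) := by
  have hsum {x : ℝ} (hx : x ∈ Ioo 0 1) :
      HasSum (fun n : ℕ => x ^ n / (n + 1)) (-log (1 - x) / x) := by
    have habs : |x| < 1 := abs_lt.2 ⟨by linarith [hx.1], hx.2⟩
    have := (hasSum_pow_div_log_of_abs_lt_one habs).div_const x
    rwa [show (fun n : ℕ => x ^ (n + 1) / (n + 1) / x) = fun n : ℕ => x ^ n / (n + 1) from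
      funext fun n => by field_simp [hx.1.ne']; ring] at this
  intro x hx y hy hxy
  exact hasSum_le (fun n => by gcongr; exact hx.1.le) (hsum hx) (hsum hy)

lemma antitoneOn_neg_mul_log_one_sub_one_div :
    AntitoneOn (fun x : ℝ => -x * log (1 - 1 / x)) (Ioi 1) := by
  intro x (hx : 1 < x) y (hy : 1 < y) hxy
  have h := monotoneOn_neg_log_one_sub_div
    ⟨one_div_pos.2 (zero_lt_one.trans hy), (div_lt_one (zero_lt_one.trans hy)).2 hy⟩
    ⟨one_div_pos.2 (zero_lt_one.trans hx), (div_lt_one (zero_lt_one.trans hx)).2 hx⟩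
    (one_div_le_one_div_of_le (zero_lt_one.trans hx) hxy)
  simpa only [div_div_eq_mul_div, div_one, neg_mul_comm, mul_comm] using h

lemma neg_log_four_fifths_lt : -log (4 / 5) < 0.2235 := by
  have h := abs_log_sub_add_sum_range_le (x := 1 / 5) (by norm_num) 4
  norm_num [Finset.sum_range_succ, abs_le] at h
  linarith [h.1]

lemma phi_neg_mul_log_four_fifths_lt : phi (-(5 / 4) * log (4 / 5)) < 4.7 := by
  set z := -(5 / 4 : ℝ) * log (4 / 5) with hz_def
  have hz : z < 0.2794 := by linarith [neg_log_four_fifths_lt]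
  have hz0 : 0 ≤ z := by
    have : log (4 / 5 : ℝ) < 0 := log_neg (by norm_num) (by norm_num)
    linarith
  have hE4 : exp z ^ 4 = (5 / 4) ^ 5 := by
    calc exp z ^ 4 = exp ((5 : ℕ) * log (5 / 4)) := by
          rw [← exp_nat_mul, hz_def, show (4 / 5 : ℝ) = (5 / 4)⁻¹ by norm_num, log_inv]
          push_cast; ring_nf
      _ = (5 / 4) ^ 5 := by rw [exp_nat_mul, exp_log (by norm_num)]
  have hEl : 1.32 < exp z := lt_of_pow_lt_pow_left₀ 4 (exp_pos z).le (by rw [hE4]; norm_num)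
  have hEu : exp z < 1.322 := lt_of_pow_lt_pow_left₀ 4 (by norm_num) (by rw [hE4]; norm_num)
  have hE1 : 0.32 ≤ exp z - 1 := by linarith
  calc phi z = exp z * (1 + z / (exp z - 1)) ^ 2 := rfl
    _ ≤ 1.322 * (1 + 0.2794 / 0.32) ^ 2 := by gcongr
    _ < 4.7 := by norm_num

theorem phi_chain_lt (N k : ℕ) (hN : 5 ≤ N) (hk1 : 1 ≤ k) (hkN : (k:ℝ) ≤ (N:ℝ)/4) :
    let φ : ℝ → ℝ := fun z => Real.exp z * (1 + z / (Real.exp z - 1)) ^ 2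
    let z₁ : ℝ := -(k:ℝ) * Real.log (1 - 1/(N:ℝ))
    let z₂ : ℝ := -((N:ℝ)/4) * Real.log (1 - 1/(N:ℝ))
    let z₃ : ℝ := -(5/4 : ℝ) * Real.log (4/5 : ℝ)
    φ z₁ ≤ φ z₂ ∧ φ z₂ ≤ φ z₃ ∧ φ z₃ < 4.7 := by
  intro φ z₁ z₂ z₃
  have hN : (5 : ℝ) ≤ N := by exact_mod_cast hN
  have hL : 0 < -log (1 - 1 / (N : ℝ)) :=
    neg_pos.2 (log_neg (by rw [sub_pos, div_lt_one] <;> linarith) (sub_lt_self 1 (by positivity)))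
  have hz₁ : 0 < z₁ := by
    simp only [z₁, neg_mul_comm]
    exact mul_pos (by exact_mod_cast hk1) hL
  have hz₁₂ : z₁ ≤ z₂ := by
    simp only [z₁, z₂, neg_mul_comm]
    exact mul_le_mul_of_nonneg_right hkN hL.le
  have hz₂₃ : z₂ ≤ z₃ := by
    have h := antitoneOn_neg_mul_log_one_sub_one_div (by norm_num : (5 : ℝ) ∈ Ioi 1)
      (by simp only [mem_Ioi]; linarith) hN
    simp only [z₂, z₃]
    norm_num at h ⊢
    linarith
  have hz₂ := hz₁.trans_le hz₁₂
  exact ⟨monotoneOn_phi hz₁ hz₂ hz₁₂, monotoneOn_phi hz₂ (hz₂.trans_le hz₂₃) hz₂₃,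
    phi_neg_mul_log_four_fifths_lt⟩
end
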